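/- Let j ≠ k be fixed indices, and let t ↦ G(t) be a family of symmetric invertible m×m real matrices, differentiable at t₀, whose derivative at t₀ is E_{jk} + E_{kj} (the matrix with ones in entries (j,k) and (k,j) and zeros elsewhere). Let t ↦ c(t) be a real function, positive and differentiable at t₀, and define σ(t) = c(t)·G(t)^{-1}·𝟙. Then for each index i, σ_i is differentiable at t₀ with derivative σ_i'(t₀) = −(G(t₀)^{-1})_{ik}·σ_j(t₀) − (G(t₀)^{-1})_{ij}·σ_k(t₀) + (c'(t₀)/c(t₀))·σ_i(t₀). -/

import Mathlib

/-!
Differentiating `G(t)⁻¹` in the Banach algebra of matrices gives `-G⁻¹ G' G⁻¹`, so by the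
product rule `σ' = c' G⁻¹𝟙 - c G⁻¹ E G⁻¹𝟙` with `E = E_{jk} + E_{kj}`. Since `c G⁻¹𝟙 = σ`, the
second term is `G⁻¹ E σ`, whose `i`-th entry is `(G⁻¹)_{ij} σ_k + (G⁻¹)_{ik} σ_j`, and the first
is `(c'/c) σ`.
-/

open Matrix

namespace Matrix

section Calculus

variable {𝕜 n : Type*} [NontriviallyNormedField 𝕜] [Fintype n] [DecidableEq n]

open scoped Norms.Operator

theorem hasDerivAt_of_hasDerivAt_apply {G : 𝕜 → Matrix n n 𝕜} {G' : Matrix n n 𝕜} {t : 𝕜}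
    (hG : ∀ a b, HasDerivAt (fun s => G s a b) (G' a b) t) : HasDerivAt G G' t := by
  have h := HasDerivAt.fun_sum (u := Finset.univ) fun a _ =>
    HasDerivAt.fun_sum (u := Finset.univ) fun b _ => (hG a b).smul_const (single a b (1 : 𝕜))
  simp only [smul_single, smul_eq_mul, mul_one, ← matrix_eq_sum_single] at h
  exact h

theorem hasDerivAt_inv [CompleteSpace 𝕜] {G : 𝕜 → Matrix n n 𝕜} {G' : Matrix n n 𝕜} {t : 𝕜}
    (hG : HasDerivAt G G' t) (hunit : IsUnit (G t)) :
    HasDerivAt (fun s => (G s)⁻¹) (-((G t)⁻¹ * G' * (G t)⁻¹)) t := by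
  -- instance search does not identify the entrywise uniformity with the operator-norm one
  have : HasSummableGeomSeries (Matrix n n 𝕜) :=
    @instHasSummableGeomSeriesOfCompleteSpace _ _ (instCompleteSpace n n 𝕜)
  obtain ⟨u, hu⟩ := hunit
  have h := (hasFDerivAt_ringInverse (𝕜 := 𝕜) u).comp_hasDerivAt_of_eq t hG hu
  simp only [Function.comp_def, _root_.neg_apply, ContinuousLinearMap.mulLeftRight_apply] at h
  simp only [nonsing_inv_eq_ringInverse, ← hu, Ring.inverse_unit]
  exact h

theorem hasDerivAt_inv_mulVec [CompleteSpace 𝕜] {G : 𝕜 → Matrix n n 𝕜} {G' : Matrix n n 𝕜}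
    {t : 𝕜} (hG : ∀ a b, HasDerivAt (fun s => G s a b) (G' a b) t) (hunit : IsUnit (G t))
    (v : n → 𝕜) :
    HasDerivAt (fun s => (G s)⁻¹ *ᵥ v) (-((G t)⁻¹ * G' * (G t)⁻¹) *ᵥ v) t := by
  exact (LinearMap.toContinuousLinearMap ((mulVecBilin 𝕜 𝕜).flip v)).hasFDerivAt.comp_hasDerivAt t
    (hasDerivAt_inv (hasDerivAt_of_hasDerivAt_apply hG) hunit)

end Calculus

theorem mulVec_mulVec_single_add_single_apply {R m n : Type*} [CommSemiring R] [Fintype n]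
    [DecidableEq n] (A : Matrix m n R) (j k : n) (w : n → R) (i : m) :
    (A *ᵥ ((single j k 1 + single k j 1) *ᵥ w)) i = A i j * w k + A i k * w j := by
  simp only [add_mulVec, mulVec_add, single_mulVec, one_mul, ← Pi.single.eq_1, Pi.add_apply,
    mulVec_single, col_apply, MulOpposite.smul_eq_mul_unop, MulOpposite.unop_op, Pi.smul_apply]

end Matrix

theorem statement_17 {m : ℕ} (j k : Fin m)
    (G : ℝ → Matrix (Fin m) (Fin m) ℝ) (t₀ : ℝ)
    (hG_inv : ∀ t, IsUnit (G t))
    (hG_deriv : ∀ a b, HasDerivAt (fun t => G t a b)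
      ((Matrix.single j k (1 : ℝ) + Matrix.single k j (1 : ℝ)) a b) t₀)
    (c : ℝ → ℝ) (hc_pos : 0 < c t₀) (c' : ℝ) (hc : HasDerivAt c c' t₀)
    (σ : ℝ → Fin m → ℝ)
    (hσ : ∀ t, σ t = c t • (G t)⁻¹.mulVec (fun _ => (1 : ℝ))) :
    ∀ i, HasDerivAt (fun t => σ t i)
      (-(G t₀)⁻¹ i k * σ t₀ j - (G t₀)⁻¹ i j * σ t₀ k + c' / c t₀ * σ t₀ i) t₀ := by
  intro i
  have hσ_deriv := hasDerivAt_pi.1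
    (hc.smul (hasDerivAt_inv_mulVec hG_deriv (hG_inv t₀) fun _ => 1)) i
  refine (hσ_deriv.congr_of_eventuallyEq (.of_forall fun t => congrFun (hσ t) i)).congr_deriv ?_
  simp only [hσ t₀, Pi.add_apply, Pi.smul_apply, Pi.neg_apply, smul_eq_mul, neg_mulVec,
    ← mulVec_mulVec, mulVec_mulVec_single_add_single_apply]
  field_simp [hc_pos.ne']
  ring
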